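/- arXiv:1004.4325 — 3 statements merged into one kernel-verified Lean document; each statement's English description precedes it below -/
import Mathlib

section
/- In G_1 (presented as above), the subgroup generated by a'_0·a''_0 is normal, infinite cyclic, and has index 4 in G_1. -/
/-
The assignment `a'_0 ↦ s_0`, `a''_0 ↦ s_2`, `a_1 ↦ s_1` (with `s_i = sr i` the reflections of
the infinite dihedral group `DihedralGroup 0`) respects the relations, and `r ↦ a'_0 a_1`,
`s_0 ↦ a'_0` defines an inverse, so `G_1 ≅ D_∞`. This sends `a'_0 a''_0` to `s_0 s_2 = r²`,
an element of infinite order whose powers are exactly the kernel of the reduction `D_∞ → D_2`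
modulo `2`; hence the subgroup is normal, infinite cyclic, and of index `|D_2| = 4`.
-/

open FreeGroup

/-- Generators of the groups `G_m` and `G̃_m`: `.inl (i, false)` is `a'_i`,
`.inl (i, true)` is `a''_i`, and `.inr ()` is `a_m`. -/
abbrev Gen (m : ℕ) := (Fin m × Bool) ⊕ Unit

/-- The defining relators of the group `G_m`. -/
def Gm.rels (m : ℕ) : Set (FreeGroup (Gen m)) :=
  {w | (∃ i : Fin m, ∃ t : Bool, w = of (.inl (i, t)) * of (.inl (i, t)))
    ∨ w = of (.inr ()) * of (.inr ())
    ∨ (∃ i j : Fin m, i < j ∧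
        (w = of (.inl (i, false)) * of (.inl (j, false)) *
             (of (.inl (j, false)) * of (.inl (i, true)))⁻¹
       ∨ w = of (.inl (i, false)) * of (.inl (j, true)) *
             (of (.inl (j, true)) * of (.inl (i, true)))⁻¹))
    ∨ (∃ i : Fin m, w = of (.inl (i, false)) * of (.inr ()) *
             (of (.inr ()) * of (.inl (i, true)))⁻¹)}

/-- The group `G_m`. -/
abbrev Gm (m : ℕ) := PresentedGroup (Gm.rels m)

def Gm.a' {m : ℕ} (i : Fin m) : Gm m := PresentedGroup.of (.inl (i, false))
def Gm.a'' {m : ℕ} (i : Fin m) : Gm m := PresentedGroup.of (.inl (i, true))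
def Gm.am (m : ℕ) : Gm m := PresentedGroup.of (.inr ())

open Subgroup in
lemma nonempty_zpowers_mulEquiv_int {G : Type*} [Group G] {g : G} (hg : ¬IsOfFinOrder g) :
    Nonempty (zpowers g ≃* Multiplicative ℤ) :=
  have : Infinite (zpowers g) := (infinite_zpowers.mpr hg).to_subtype
  ⟨intCyclicMulEquiv.symm⟩

namespace DihedralGroup

variable {n m : ℕ} {G : Type*} [Group G]

def lift (ρ : Multiplicative (ZMod n) →* G) (b : G) (hb : b * b = 1)
    (hρ : ∀ i, b * ρ i * b = (ρ i)⁻¹) : DihedralGroup n →* G where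
  toFun
    | r i => ρ (.ofAdd i)
    | sr i => b * ρ (.ofAdd i)
  map_one' := map_one ρ
  map_mul' := by
    have hρb (i) : ρ i * b = b * (ρ i)⁻¹ := by
      rw [← hρ, ← mul_assoc, ← mul_assoc, hb, one_mul]
    rintro (i | i) (j | j) <;>
      simp only [r_mul_r, r_mul_sr, sr_mul_r, sr_mul_sr, sub_eq_neg_add, ofAdd_add, ofAdd_neg,
        _root_.map_mul]
    · rw [_root_.map_inv, ← mul_assoc (ρ _), hρb, mul_assoc]
    · rw [mul_assoc]
    · rw [_root_.map_inv, mul_assoc, ← mul_assoc (ρ _), hρb, ← mul_assoc, ← mul_assoc, hb,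
        one_mul]

@[simp] lemma lift_r (ρ : Multiplicative (ZMod n) →* G) (b : G) (hb hρ) (i : ZMod n) :
    lift ρ b hb hρ (r i) = ρ (.ofAdd i) := rfl

@[simp] lemma lift_sr (ρ : Multiplicative (ZMod n) →* G) (b : G) (hb hρ) (i : ZMod n) :
    lift ρ b hb hρ (sr i) = b * ρ (.ofAdd i) := rfl

def map (f : ZMod n →+ ZMod m) : DihedralGroup n →* DihedralGroup m where
  toFun
    | r i => r (f i)
    | sr i => sr (f i)
  map_one' := congrArg r (map_zero f)
  map_mul' := by
    rintro (i | i) (j | j) <;>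
      simp only [r_mul_r, r_mul_sr, sr_mul_r, sr_mul_sr, map_add, map_sub]

@[simp] lemma map_r (f : ZMod n →+ ZMod m) (i : ZMod n) : map f (r i) = r (f i) := rfl

@[simp] lemma map_sr (f : ZMod n →+ ZMod m) (i : ZMod n) : map f (sr i) = sr (f i) := rfl

lemma map_surjective {f : ZMod n →+ ZMod m} (hf : Function.Surjective f) :
    Function.Surjective (map f) := by
  rintro (i | i) <;> obtain ⟨j, rfl⟩ := hf i
  exacts [⟨r j, rfl⟩, ⟨sr j, rfl⟩]

lemma r_eq_one_iff {i : ZMod n} : r i = 1 ↔ i = 0 := by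
  rw [one_def, r.injEq]

lemma mem_ker_map {f : ZMod n →+ ZMod m} {x : DihedralGroup n} :
    x ∈ (map f).ker ↔ ∃ i, f i = 0 ∧ r i = x := by
  rcases x with i | i
  · simp [r_eq_one_iff]
  · simp only [MonoidHom.mem_ker, map_sr, one_def, reduceCtorEq, and_false, exists_false]

lemma ker_map_castHom (h : m ∣ n) :
    (map (ZMod.castHom h (ZMod m)).toAddMonoidHom).ker = Subgroup.zpowers (r (m : ZMod n)) := by
  refine Subgroup.ext fun x => ?_
  simp only [mem_ker_map, Subgroup.mem_zpowers_iff, r_zpow, RingHom.toAddMonoidHom_eq_coe,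
    AddMonoidHom.coe_coe]
  constructor
  · rintro ⟨i, hi, rfl⟩
    obtain ⟨j, rfl⟩ := ZMod.intCast_surjective i
    rw [map_intCast, ZMod.intCast_zmod_eq_zero_iff_dvd] at hi
    obtain ⟨k, rfl⟩ := hi
    exact ⟨k, by push_cast; rfl⟩
  · rintro ⟨k, rfl⟩
    refine ⟨_, ?_, rfl⟩
    rw [_root_.map_mul, map_natCast, map_intCast, ZMod.natCast_self, zero_mul]

lemma index_zpowers_r_natCast (h : m ∣ n) :
    (Subgroup.zpowers (r (m : ZMod n))).index = 2 * m := by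
  rw [← ker_map_castHom h, Subgroup.index_ker, MonoidHom.range_eq_top.mpr
    (map_surjective (ZMod.castHom_surjective h)), Subgroup.card_top, nat_card]

lemma not_isOfFinOrder_r {i : ZMod 0} (hi : i ≠ 0) : ¬IsOfFinOrder (r i) := by
  rw [isOfFinOrder_iff_pow_eq_one]
  rintro ⟨k, hk, h⟩
  rw [r_pow, r_eq_one_iff, mul_eq_zero, Nat.cast_eq_zero] at h
  exact h.elim hi hk.ne'

lemma normal_zpowers_r_natCast (h : m ∣ n) : (Subgroup.zpowers (r (m : ZMod n))).Normal :=
  ker_map_castHom h ▸ MonoidHom.normal_ker _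

end DihedralGroup

namespace Gm

open DihedralGroup Subgroup

variable {m : ℕ}

lemma a'_mul_self (i : Fin m) : a' i * a' i = 1 :=
  PresentedGroup.one_of_mem (Or.inl ⟨i, false, rfl⟩)

lemma am_mul_self (m : ℕ) : am m * am m = 1 :=
  PresentedGroup.one_of_mem (Or.inr (Or.inl rfl))

lemma a'_mul_am (i : Fin m) : a' i * am m = am m * a'' i :=
  PresentedGroup.mk_eq_mk_of_mul_inv_mem (Or.inr (Or.inr (Or.inr ⟨i, rfl⟩)))

def toDihedral : Gm 1 →* DihedralGroup 0 :=
  PresentedGroup.toGroup (f := fun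
    | .inl (_, false) => sr 0
    | .inl (_, true) => sr 2
    | .inr _ => sr 1) <| by
  rintro w (⟨i, t, rfl⟩ | rfl | ⟨i, j, hij, -⟩ | ⟨i, rfl⟩)
  · cases t <;> simp
  · simp
  · exact absurd hij (Subsingleton.elim i j).not_lt
  · simp [sr_mul_sr, r_mul_r, r_eq_one_iff]
    ring

@[simp] lemma toDihedral_a' : toDihedral (a' 0) = sr 0 := PresentedGroup.toGroup.of _
@[simp] lemma toDihedral_a'' : toDihedral (a'' 0) = sr 2 := PresentedGroup.toGroup.of _
@[simp] lemma toDihedral_am : toDihedral (am 1) = sr 1 := PresentedGroup.toGroup.of _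

lemma a'_mul_a'_mul (i : Fin m) (x : Gm m) : a' i * (a' i * x) = x := by
  rw [← mul_assoc, a'_mul_self, one_mul]

lemma am_mul_am_mul (x : Gm m) : am m * (am m * x) = x := by
  rw [← mul_assoc, am_mul_self, one_mul]

lemma a'_inv (i : Fin m) : (a' i)⁻¹ = a' i := inv_eq_of_mul_eq_one_right (a'_mul_self i)

lemma am_inv (m : ℕ) : (am m)⁻¹ = am m := inv_eq_of_mul_eq_one_right (am_mul_self m)

-- `ZMod 0` is `ℤ` only by unfolding, so the exponent goes through `ZMod.castHom`.
def rotation : Multiplicative (ZMod 0) →* Gm 1 :=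
  (zpowersHom _ (a' 0 * am 1)).comp (ZMod.castHom (dvd_refl 0) ℤ).toAddMonoidHom.toMultiplicative

lemma rotation_ofAdd (i : ZMod 0) : rotation (.ofAdd i) = (a' 0 * am 1) ^ (ZMod.cast i : ℤ) := rfl

lemma toDihedral_rotation (i : ZMod 0) : toDihedral (rotation (.ofAdd i)) = r i := by
  rw [rotation_ofAdd, map_zpow, _root_.map_mul]
  simp [sr_mul_sr]

lemma a'_mul_rotation_mul_a' (k : Multiplicative (ZMod 0)) :
    a' 0 * rotation k * a' 0 = (rotation k)⁻¹ := by
  have hconj : a' 0 * (a' 0 * am 1) * a' 0 = (a' 0 * am 1)⁻¹ := by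
    rw [mul_inv_rev, a'_inv, am_inv, ← mul_assoc, a'_mul_self, one_mul]
  have h := conj_zpow (a := a' 0) (b := a' 0 * am 1) (i := ZMod.cast k.toAdd)
  rw [a'_inv, hconj, inv_zpow] at h
  rw [← ofAdd_toAdd k, rotation_ofAdd, ← h]

def ofDihedral : DihedralGroup 0 →* Gm 1 :=
  lift rotation (a' 0) (a'_mul_self 0) a'_mul_rotation_mul_a'

lemma ofDihedral_comp_toDihedral : ofDihedral.comp toDihedral = .id _ := by
  refine PresentedGroup.ext ?_
  rintro (⟨i, _ | _⟩ | ⟨⟩)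
  · obtain rfl := Subsingleton.elim i 0
    change ofDihedral (toDihedral (a' 0)) = a' 0
    simp [ofDihedral]
  · obtain rfl := Subsingleton.elim i 0
    change ofDihedral (toDihedral (a'' 0)) = a'' 0
    simp only [ofDihedral, toDihedral_a'', lift_sr, rotation_ofAdd]
    rw [show (ZMod.cast (2 : ZMod 0) : ℤ) = 2 from rfl, zpow_two, mul_assoc, a'_mul_a'_mul,
      a'_mul_am, am_mul_am_mul]
  · change ofDihedral (toDihedral (am 1)) = am 1
    simp only [ofDihedral, toDihedral_am, lift_sr, rotation_ofAdd]
    rw [show (ZMod.cast (1 : ZMod 0) : ℤ) = 1 from rfl, zpow_one, a'_mul_a'_mul]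

lemma toDihedral_comp_ofDihedral : toDihedral.comp ofDihedral = .id _ := by
  ext (i | i) <;> simp [ofDihedral, toDihedral_rotation]

def mulEquivDihedral : Gm 1 ≃* DihedralGroup 0 :=
  toDihedral.toMulEquiv ofDihedral ofDihedral_comp_toDihedral toDihedral_comp_ofDihedral

lemma mulEquivDihedral_a'_mul_a'' : mulEquivDihedral (a' 0 * a'' 0) = r (2 : ℕ) := by
  simp [mulEquivDihedral, sr_mul_sr]

lemma closure_a'_mul_a''_eq_comap :
    Subgroup.closure {a' (0 : Fin 1) * a'' 0} =
      (zpowers (r (2 : ℕ))).comap (mulEquivDihedral : Gm 1 →* DihedralGroup 0) := by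
  rw [← zpowers_eq_closure, ← mulEquivDihedral_a'_mul_a'', comap_equiv_eq_map_symm,
    MonoidHom.map_zpowers]
  simp

lemma not_isOfFinOrder_a'_mul_a'' : ¬IsOfFinOrder (a' (0 : Fin 1) * a'' 0) := fun h =>
  not_isOfFinOrder_r (by decide) <|
    mulEquivDihedral_a'_mul_a'' ▸ (mulEquivDihedral : Gm 1 →* DihedralGroup 0).isOfFinOrder h

end Gm

/-- In `G_1`, the subgroup generated by `a'_0 · a''_0` is normal, infinite
cyclic, and has index `4`. -/
theorem stmt_2 :
    (Subgroup.closure {Gm.a' (0 : Fin 1) * Gm.a'' (0 : Fin 1)}).Normal ∧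
    Nonempty ((Subgroup.closure {Gm.a' (0 : Fin 1) * Gm.a'' (0 : Fin 1)}) ≃*
      Multiplicative ℤ) ∧
    (Subgroup.closure {Gm.a' (0 : Fin 1) * Gm.a'' (0 : Fin 1)}).index = 4 := by
  refine ⟨?_, ?_, ?_⟩
  · rw [Gm.closure_a'_mul_a''_eq_comap]
    exact (DihedralGroup.normal_zpowers_r_natCast (dvd_zero 2)).comap _
  · rw [← Subgroup.zpowers_eq_closure]
    exact nonempty_zpowers_mulEquiv_int Gm.not_isOfFinOrder_a'_mul_a''
  · rw [Gm.closure_a'_mul_a''_eq_comap,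
      Subgroup.index_comap_of_surjective _ (MulEquiv.surjective _),
      DihedralGroup.index_zpowers_r_natCast (dvd_zero 2)]
end

section
/- There is a well-defined group homomorphism φ : G_1 → ℤ ⋊ (ℤ/2) (infinite dihedral group, with ℤ/2 acting on ℤ by negation) given by φ(a'_0) = (1, 1̄), φ(a''_0) = (-1, 1̄), φ(a_1) = (0, 1̄); this assignment respects all defining relations of G_1 and hence extends to a homomorphism, which is surjective. -/
open FreeGroup

def targ : Gen 1 → DihedralGroup 0
  | .inl (_, false) => .sr 1
  | .inl (_, true) => .sr (-1)
  | .inr _ => .sr 0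

lemma targ_rels : ∀ r ∈ Gm.rels 1, FreeGroup.lift targ r = 1 := by
  rintro r (⟨i, t, rfl⟩ | rfl | ⟨i, j, hij, -⟩ | ⟨i, rfl⟩)
  · cases t <;> simp [targ] <;> decide
  · simp [targ]
  · exact absurd hij (by omega)
  · simp [targ]

lemma r_inv (k : ℤ) : (DihedralGroup.r (n := 0) k)⁻¹ = DihedralGroup.r (-k) := rfl

lemma r_one_zpow (k : ℤ) : (DihedralGroup.r (n := 0) 1) ^ k = DihedralGroup.r k := by
  cases k with
  | ofNat k => rw [Int.ofNat_eq_coe, zpow_natCast, DihedralGroup.r_one_pow]; rfl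
  | negSucc k =>
      rw [zpow_negSucc, DihedralGroup.r_one_pow]; exact r_inv _

/-- There is a well-defined group homomorphism `φ : G_1 → ℤ ⋊ ℤ/2` (the
infinite dihedral group, realized as `DihedralGroup 0`, where `sr n` is the
pair `(n, 1̄)`) with `φ(a'_0) = (1, 1̄)`, `φ(a''_0) = (-1, 1̄)`,
`φ(a_1) = (0, 1̄)`, and it is surjective. -/
theorem stmt_3 :
    ∃ φ : Gm 1 →* DihedralGroup 0,
      φ (Gm.a' (0 : Fin 1)) = DihedralGroup.sr 1 ∧
      φ (Gm.a'' (0 : Fin 1)) = DihedralGroup.sr (-1) ∧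
      φ (Gm.am 1) = DihedralGroup.sr 0 ∧
      Function.Surjective φ := by
  have key : ∀ x, (PresentedGroup.toGroup targ_rels) (PresentedGroup.of x) = targ x :=
    fun _ => PresentedGroup.toGroup.of targ_rels
  refine ⟨PresentedGroup.toGroup targ_rels, key _, key _, key _, ?_⟩
  have hr : (PresentedGroup.toGroup targ_rels) (Gm.am 1 * Gm.a' 0) = DihedralGroup.r 1 := by
    rw [_root_.map_mul]
    rw [show Gm.am 1 = PresentedGroup.of (.inr ()) from rfl,
        show Gm.a' (0 : Fin 1) = PresentedGroup.of (.inl (0, false)) from rfl, key, key]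
    decide
  intro g
  obtain ⟨m⟩ | ⟨m⟩ := g
  · refine ⟨(Gm.am 1 * Gm.a' 0) ^ (show ℤ from m), ?_⟩
    rw [map_zpow, hr]
    exact r_one_zpow m
  · refine ⟨Gm.am 1 * (Gm.am 1 * Gm.a' 0) ^ (show ℤ from m), ?_⟩
    rw [_root_.map_mul, map_zpow, hr,
        show Gm.am 1 = PresentedGroup.of (.inr ()) from rfl, key]
    rw [show ((DihedralGroup.r 1 : DihedralGroup 0) ^ (show ℤ from m)) = DihedralGroup.r m from r_one_zpow m]
    show DihedralGroup.sr 0 * _ = _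
    rw [DihedralGroup.sr_mul_r, zero_add]
end

section
/- In the rational group algebra ℚ[G̃_m], for any generator u ∈ {a'_0, a''_0, …, a'_{m-1}, a''_{m-1}} and any i with u ∈ {a'_i, a''_i}, and any j > i, conjugation relations hold: a'_j·(u - u⁻¹) = (v - v⁻¹)·a'_j where v is the 'partner' generator of u (a'_i ↔ a''_i). Consequently, any product α_1·(u_1 - u_1⁻¹)·α_2·(u_2 - u_2⁻¹)···α_{k+1}·(u_{k+1} - u_{k+1}⁻¹)·α_{k+2}, with each u_t a generator a'_{n_t} or a''_{n_t} and each α_t a group element, can be rewritten as β·∏_{t}( w_t - w_t⁻¹ ) for suitable group elements β and generators w_t, up to the commutation relations. -/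
open FreeGroup

/-- The defining relators of the group `G̃_m`. -/
def Gt.rels (m : ℕ) : Set (FreeGroup (Gen m)) :=
  {w | w = of (.inr ()) * of (.inr ())
    ∨ (∃ i : Fin m, w = (of (.inl (i, false)))^2 * ((of (.inl (i, true)))^2)⁻¹)
    ∨ (∃ i j : Fin m, i < j ∧
        (w = of (.inl (i, false)) * of (.inl (j, false)) *
             (of (.inl (j, false)) * of (.inl (i, true)))⁻¹
       ∨ w = of (.inl (i, false)) * of (.inl (j, true)) *
             (of (.inl (j, true)) * of (.inl (i, true)))⁻¹
       ∨ w = of (.inl (j, false)) * of (.inl (i, false)) *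
             (of (.inl (i, true)) * of (.inl (j, false)))⁻¹
       ∨ w = of (.inl (j, true)) * of (.inl (i, false)) *
             (of (.inl (i, true)) * of (.inl (j, true)))⁻¹))
    ∨ (∃ i : Fin m, w = of (.inl (i, false)) * of (.inr ()) *
             (of (.inr ()) * of (.inl (i, true)))⁻¹)}

/-- The group `G̃_m`. -/
abbrev Gt (m : ℕ) := PresentedGroup (Gt.rels m)

def Gt.a' {m : ℕ} (i : Fin m) : Gt m := PresentedGroup.of (.inl (i, false))
def Gt.a'' {m : ℕ} (i : Fin m) : Gt m := PresentedGroup.of (.inl (i, true))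
def Gt.am (m : ℕ) : Gt m := PresentedGroup.of (.inr ())

/-- The canonical embedding of `G̃_m` into its rational group algebra. -/
noncomputable def ι (m : ℕ) : Gt m →* MonoidAlgebra ℚ (Gt m) :=
  (MonoidAlgebra.of ℚ (Gt m))

/-- The generator of `G̃_m` corresponding to `a'_i` (`snd = false`) or
`a''_i` (`snd = true`). -/
def gen {m : ℕ} (g : Fin m × Bool) : Gt m := PresentedGroup.of (.inl g)

/-- The element `u - u⁻¹` of `ℚ[G̃_m]` for a generator `u = a'_i` or `a''_i`. -/
noncomputable def D {m : ℕ} (g : Fin m × Bool) : MonoidAlgebra ℚ (Gt m) :=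
  ι m (gen g) - ι m (gen g)⁻¹

section Stmt10Aux

variable {m : ℕ}

/-! ### Group-level consequences of the relators -/

lemma Gt.rel_one {r : FreeGroup (Gen m)} (h : r ∈ Gt.rels m) :
    PresentedGroup.mk (Gt.rels m) r = 1 :=
  (QuotientGroup.eq_one_iff r).mpr (Subgroup.subset_normalClosure h)

lemma Gt.mk_eq {a b : FreeGroup (Gen m)} (h : a * b⁻¹ ∈ Gt.rels m) :
    PresentedGroup.mk (Gt.rels m) a = PresentedGroup.mk (Gt.rels m) b := by
  have h1 : PresentedGroup.mk (Gt.rels m) (a * b⁻¹) = 1 := Gt.rel_one h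
  rw [_root_.map_mul, _root_.map_inv, mul_inv_eq_one] at h1
  exact h1

lemma Gt.am_am : Gt.am m * Gt.am m = 1 := by
  have h1 : PresentedGroup.mk (Gt.rels m)
      (FreeGroup.of (Sum.inr ()) * FreeGroup.of (Sum.inr ())) = 1 :=
    Gt.rel_one (Or.inl rfl)
  rw [_root_.map_mul] at h1
  exact h1

lemma Gt.am_inv : (Gt.am m)⁻¹ = Gt.am m :=
  inv_eq_of_mul_eq_one_right Gt.am_am

lemma Gt.sq (i : Fin m) :
    gen (i, false) * gen (i, false) = gen (i, true) * gen (i, true) := by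
  have h1 := Gt.mk_eq (m := m) (a := (FreeGroup.of (Sum.inl (i, false)))^2)
    (b := (FreeGroup.of (Sum.inl (i, true)))^2) (Or.inr (Or.inl ⟨i, rfl⟩))
  rw [pow_two, pow_two, _root_.map_mul, _root_.map_mul] at h1
  exact h1

lemma Gt.relA {i j : Fin m} (h : i < j) (s : Bool) :
    gen (i, false) * gen (j, s) = gen (j, s) * gen (i, true) := by
  cases s
  · have h1 := Gt.mk_eq (m := m)
      (a := FreeGroup.of (Sum.inl (i, false)) * FreeGroup.of (Sum.inl (j, false)))
      (b := FreeGroup.of (Sum.inl (j, false)) * FreeGroup.of (Sum.inl (i, true)))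
      (Or.inr (Or.inr (Or.inl ⟨i, j, h, Or.inl rfl⟩)))
    rw [_root_.map_mul, _root_.map_mul] at h1
    exact h1
  · have h1 := Gt.mk_eq (m := m)
      (a := FreeGroup.of (Sum.inl (i, false)) * FreeGroup.of (Sum.inl (j, true)))
      (b := FreeGroup.of (Sum.inl (j, true)) * FreeGroup.of (Sum.inl (i, true)))
      (Or.inr (Or.inr (Or.inl ⟨i, j, h, Or.inr (Or.inl rfl)⟩)))
    rw [_root_.map_mul, _root_.map_mul] at h1
    exact h1

lemma Gt.relC {i j : Fin m} (h : i < j) (s : Bool) :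
    gen (j, s) * gen (i, false) = gen (i, true) * gen (j, s) := by
  cases s
  · have h1 := Gt.mk_eq (m := m)
      (a := FreeGroup.of (Sum.inl (j, false)) * FreeGroup.of (Sum.inl (i, false)))
      (b := FreeGroup.of (Sum.inl (i, true)) * FreeGroup.of (Sum.inl (j, false)))
      (Or.inr (Or.inr (Or.inl ⟨i, j, h, Or.inr (Or.inr (Or.inl rfl))⟩)))
    rw [_root_.map_mul, _root_.map_mul] at h1
    exact h1
  · have h1 := Gt.mk_eq (m := m)
      (a := FreeGroup.of (Sum.inl (j, true)) * FreeGroup.of (Sum.inl (i, false)))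
      (b := FreeGroup.of (Sum.inl (i, true)) * FreeGroup.of (Sum.inl (j, true)))
      (Or.inr (Or.inr (Or.inl ⟨i, j, h, Or.inr (Or.inr (Or.inr rfl))⟩)))
    rw [_root_.map_mul, _root_.map_mul] at h1
    exact h1

lemma Gt.relE (i : Fin m) :
    gen (i, false) * Gt.am m = Gt.am m * gen (i, true) := by
  have h1 := Gt.mk_eq (m := m)
    (a := FreeGroup.of (Sum.inl (i, false)) * FreeGroup.of (Sum.inr ()))
    (b := FreeGroup.of (Sum.inr ()) * FreeGroup.of (Sum.inl (i, true)))
    (Or.inr (Or.inr (Or.inr ⟨i, rfl⟩)))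
  rw [_root_.map_mul, _root_.map_mul] at h1
  exact h1

lemma Gt.swap {i j : Fin m} (h : i < j) (s t : Bool) :
    gen (j, s) * gen (i, t) = gen (i, !t) * gen (j, s) := by
  cases t
  · exact Gt.relC h s
  · exact (Gt.relA h s).symm

lemma Gt.swap' {i j : Fin m} (h : i < j) (s t : Bool) :
    gen (i, t) * gen (j, s) = gen (j, s) * gen (i, !t) := by
  cases t
  · exact Gt.relA h s
  · exact (Gt.relC h s).symm

/-! ### Conjugation helpers in an arbitrary group -/

section ConjHelpers

variable {G : Type*} [Group G] {a X b : G}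

lemma cj1 (h : a * X = X * b) : a⁻¹ * X = X * b⁻¹ := by
  calc a⁻¹ * X = a⁻¹ * (X * b) * b⁻¹ := by group
    _ = a⁻¹ * (a * X) * b⁻¹ := by rw [h]
    _ = X * b⁻¹ := by group

lemma cj2 (h : a * X = b * a) : a⁻¹ * b = X * a⁻¹ := by
  calc a⁻¹ * b = a⁻¹ * (b * a) * a⁻¹ := by group
    _ = a⁻¹ * (a * X) * a⁻¹ := by rw [h]
    _ = X * a⁻¹ := by group

lemma cj3 (h : X * a = b * X) : a * X⁻¹ = X⁻¹ * b := by
  calc a * X⁻¹ = X⁻¹ * (X * a) * X⁻¹ := by group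
    _ = X⁻¹ * (b * X) * X⁻¹ := by rw [h]
    _ = X⁻¹ * b := by group

lemma cj4 (h : a * X = b * a) : a * X⁻¹ = b⁻¹ * a := by
  calc a * X⁻¹ = b⁻¹ * (b * a) * X⁻¹ := by group
    _ = b⁻¹ * (a * X) * X⁻¹ := by rw [h]
    _ = b⁻¹ * a := by group

lemma cj5 (h : X * a = b * X) : X * a⁻¹ = b⁻¹ * X := by
  calc X * a⁻¹ = b⁻¹ * (b * X) * a⁻¹ := by group
    _ = b⁻¹ * (X * a) * a⁻¹ := by rw [h]
    _ = b⁻¹ * X := by group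

lemma cj6 (h : a * X = b * a) : a⁻¹ * b⁻¹ = X⁻¹ * a⁻¹ := by
  have h2 : (b * a)⁻¹ = (a * X)⁻¹ := by rw [h]
  simpa [mul_inv_rev] using h2

end ConjHelpers

lemma Gt.genam (i : Fin m) (t : Bool) :
    gen (i, t) * Gt.am m = Gt.am m * gen (i, !t) := by
  cases t
  · exact Gt.relE i
  · have h := Gt.relE i
    calc gen (i, true) * Gt.am m
        = (Gt.am m)⁻¹ * (Gt.am m * gen (i, true)) * Gt.am m := by group
      _ = (Gt.am m)⁻¹ * (gen (i, false) * Gt.am m) * Gt.am m := by rw [h]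
      _ = (Gt.am m)⁻¹ * gen (i, false) * (Gt.am m * Gt.am m) := by group
      _ = Gt.am m * gen (i, false) := by rw [Gt.am_am, Gt.am_inv]; group

lemma Gt.mixedF (i : Fin m) :
    (gen (i, false))⁻¹ * gen (i, true) = gen (i, false) * (gen (i, true))⁻¹ := by
  calc (gen (i, false))⁻¹ * gen (i, true)
      = (gen (i, false))⁻¹ * (gen (i, true) * gen (i, true)) * (gen (i, true))⁻¹ := by group
    _ = (gen (i, false))⁻¹ * (gen (i, false) * gen (i, false)) * (gen (i, true))⁻¹ := by
        rw [← Gt.sq]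
    _ = gen (i, false) * (gen (i, true))⁻¹ := by group

lemma Gt.mixedT (i : Fin m) :
    (gen (i, true))⁻¹ * gen (i, false) = gen (i, true) * (gen (i, false))⁻¹ := by
  calc (gen (i, true))⁻¹ * gen (i, false)
      = (gen (i, true))⁻¹ * (gen (i, false) * gen (i, false)) * (gen (i, false))⁻¹ := by group
    _ = (gen (i, true))⁻¹ * (gen (i, true) * gen (i, true)) * (gen (i, false))⁻¹ := by
        rw [Gt.sq]
    _ = gen (i, true) * (gen (i, false))⁻¹ := by group

lemma Gt.sq_inv (i : Fin m) :
    (gen (i, false))⁻¹ * (gen (i, false))⁻¹ = (gen (i, true))⁻¹ * (gen (i, true))⁻¹ := by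
  have h2 : (gen (i, false) * gen (i, false))⁻¹
      = (gen (i, true) * gen (i, true))⁻¹ := by rw [Gt.sq]
  simpa [mul_inv_rev] using h2

/-! ### Moving a generator-difference past group elements -/

lemma Gt.move_of (x : Gen m) (u : Fin m × Bool) :
    ∃ (g' : Gt m) (v : Fin m × Bool),
      gen u * PresentedGroup.of x = g' * gen v ∧
      (gen u)⁻¹ * PresentedGroup.of x = g' * (gen v)⁻¹ := by
  obtain ⟨i, t⟩ := u
  cases x with
  | inr y =>
    cases y
    exact ⟨Gt.am m, (i, !t), Gt.genam i t, cj1 (Gt.genam i t)⟩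
  | inl p =>
    obtain ⟨j, s⟩ := p
    rcases lt_trichotomy i j with hij | hij | hij
    · exact ⟨gen (j, s), (i, !t), Gt.swap' hij s t, cj1 (Gt.swap' hij s t)⟩
    · subst hij
      refine ⟨gen (i, !s), (i, !t), ?_, ?_⟩
      · cases t <;> cases s
        · exact Gt.sq i
        · rfl
        · rfl
        · exact (Gt.sq i).symm
      · cases t <;> cases s
        · simp [gen]
        · exact Gt.mixedF i
        · exact Gt.mixedT i
        · simp [gen]
    · have h1 := Gt.swap hij t (!s)
      rw [Bool.not_not] at h1
      exact ⟨gen (j, !s), (i, t), Gt.swap hij t s, cj2 h1⟩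

lemma Gt.move_of_inv (x : Gen m) (u : Fin m × Bool) :
    ∃ (g' : Gt m) (v : Fin m × Bool),
      gen u * (PresentedGroup.of x : Gt m)⁻¹ = g' * gen v ∧
      (gen u)⁻¹ * (PresentedGroup.of x : Gt m)⁻¹ = g' * (gen v)⁻¹ := by
  obtain ⟨i, t⟩ := u
  cases x with
  | inr y =>
    cases y
    have e : (PresentedGroup.of (Sum.inr ()) : Gt m)⁻¹ = Gt.am m := Gt.am_inv
    rw [e]
    exact ⟨Gt.am m, (i, !t), Gt.genam i t, cj1 (Gt.genam i t)⟩
  | inl p =>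
    obtain ⟨j, s⟩ := p
    rcases lt_trichotomy i j with hij | hij | hij
    · have c1 : gen (i, t) * (gen (j, s))⁻¹ = (gen (j, s))⁻¹ * gen (i, !t) :=
        cj3 (Gt.swap hij s t)
      exact ⟨(gen (j, s))⁻¹, (i, !t), c1, cj1 c1⟩
    · subst hij
      refine ⟨(gen (i, !s))⁻¹, (i, !t), ?_, ?_⟩
      · cases t <;> cases s
        · simp [gen]
        · exact (Gt.mixedF i).symm
        · exact (Gt.mixedT i).symm
        · simp [gen]
      · cases t <;> cases s
        · exact Gt.sq_inv i
        · rfl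
        · rfl
        · exact (Gt.sq_inv i).symm
    · have h1 := Gt.swap hij t (!s)
      rw [Bool.not_not] at h1
      exact ⟨(gen (j, !s))⁻¹, (i, t), cj4 (Gt.swap hij t s), cj6 h1⟩

lemma Gt.moveG (g : Gt m) : ∀ u : Fin m × Bool,
    ∃ (g' : Gt m) (v : Fin m × Bool),
      gen u * g = g' * gen v ∧ (gen u)⁻¹ * g = g' * (gen v)⁻¹ := by
  refine PresentedGroup.induction_on
    (C := fun g => ∀ u : Fin m × Bool,
      ∃ (g' : Gt m) (v : Fin m × Bool),
        gen u * g = g' * gen v ∧ (gen u)⁻¹ * g = g' * (gen v)⁻¹) g ?_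
  intro z
  refine FreeGroup.induction_on
    (C := fun z => ∀ u : Fin m × Bool,
      ∃ (g' : Gt m) (v : Fin m × Bool),
        gen u * PresentedGroup.mk (Gt.rels m) z = g' * gen v ∧
        (gen u)⁻¹ * PresentedGroup.mk (Gt.rels m) z = g' * (gen v)⁻¹)
    z ?_ ?_ ?_ ?_
  · intro u
    exact ⟨1, u, by simp, by simp⟩
  · intro x u
    exact Gt.move_of x u
  · intro x _ u
    rw [_root_.map_inv]
    exact Gt.move_of_inv x u
  · intro y z hy hz u
    obtain ⟨g1, v1, h11, h12⟩ := hy u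
    obtain ⟨g2, v2, h21, h22⟩ := hz v1
    refine ⟨g1 * g2, v2, ?_, ?_⟩
    · rw [_root_.map_mul, ← mul_assoc, h11, mul_assoc, h21, ← mul_assoc]
    · rw [_root_.map_mul, ← mul_assoc, h12, mul_assoc, h22, ← mul_assoc]

/-! ### Algebra level -/

lemma Dmul {u v : Fin m × Bool} {g g' : Gt m}
    (h1 : gen u * g = g' * gen v) (h2 : (gen u)⁻¹ * g = g' * (gen v)⁻¹) :
    D u * ι m g = ι m g' * D v := by
  simp only [D, sub_mul, mul_sub, ← _root_.map_mul, h1, h2]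

lemma Dmul' {u v : Fin m × Bool} {g : Gt m}
    (h1 : g * gen u = gen v * g) (h2 : g * (gen u)⁻¹ = (gen v)⁻¹ * g) :
    ι m g * D u = D v * ι m g := by
  simp only [D, sub_mul, mul_sub, ← _root_.map_mul, h1, h2]

lemma moveD (g : Gt m) (u : Fin m × Bool) :
    ∃ (g' : Gt m) (v : Fin m × Bool), D u * ι m g = ι m g' * D v := by
  obtain ⟨g', v, h1, h2⟩ := Gt.moveG g u
  exact ⟨g', v, Dmul h1 h2⟩

lemma prod_ofFn_succ {M : Type*} [Monoid M] {n : ℕ} (f : Fin (n + 1) → M) :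
    (List.ofFn f).prod = (List.ofFn fun i : Fin n => f i.castSucc).prod * f (Fin.last n) := by
  rw [List.ofFn_succ', List.prod_concat]

lemma main2 (m : ℕ) (k : ℕ) : ∀ (α : Fin (k + 2) → Gt m) (u : Fin (k + 1) → Fin m × Bool),
    ∃ (β : Gt m) (w : Fin (k + 1) → Fin m × Bool),
      (List.ofFn fun t : Fin (k + 1) =>
          ι m (α t.castSucc) * D (u t)).prod * ι m (α (Fin.last (k + 1))) =
        ι m β * (List.ofFn fun t : Fin (k + 1) => D (w t)).prod := by
  induction k with
  | zero =>
    intro α u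
    obtain ⟨g', v, hv⟩ := moveD (α (Fin.last 1)) (u 0)
    refine ⟨α (Fin.castSucc 0) * g', fun _ => v, ?_⟩
    simp only [List.ofFn_succ, List.ofFn_zero, List.prod_cons, List.prod_nil, mul_one]
    rw [mul_assoc, hv, ← mul_assoc, ← _root_.map_mul]
  | succ k IH =>
    intro α u
    obtain ⟨g', v, hv⟩ := moveD (α (Fin.last (k + 2))) (u (Fin.last (k + 1)))
    obtain ⟨β, w', hw⟩ := IH
      (Fin.snoc (fun t : Fin (k + 1) => α t.castSucc.castSucc)
        (α (Fin.last (k + 1)).castSucc * g'))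
      (fun t => u t.castSucc)
    simp only [Fin.snoc_castSucc, Fin.snoc_last] at hw
    refine ⟨β, Fin.snoc w' v, ?_⟩
    have L1 : (List.ofFn fun t : Fin (k + 2) => ι m (α t.castSucc) * D (u t)).prod
        = (List.ofFn fun t : Fin (k + 1) =>
            ι m (α t.castSucc.castSucc) * D (u t.castSucc)).prod
          * (ι m (α (Fin.last (k + 1)).castSucc) * D (u (Fin.last (k + 1)))) :=
      prod_ofFn_succ _
    have R1 : (List.ofFn fun t : Fin (k + 2) =>
        D ((Fin.snoc w' v : Fin (k + 2) → Fin m × Bool) t)).prod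
        = (List.ofFn fun t : Fin (k + 1) => D (w' t)).prod * D v := by
      rw [prod_ofFn_succ]
      simp only [Fin.snoc_castSucc, Fin.snoc_last]
    have key : (ι m (α (Fin.last (k + 1)).castSucc) * D (u (Fin.last (k + 1))))
        * ι m (α (Fin.last (k + 2)))
        = ι m (α (Fin.last (k + 1)).castSucc * g') * D v := by
      rw [mul_assoc, hv, ← mul_assoc, ← _root_.map_mul]
    rw [L1, R1, mul_assoc, key, ← mul_assoc, hw, mul_assoc]

end Stmt10Aux


/-- In `ℚ[G̃_m]`: for `i < j`, a generator with index `j` moved past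
`u - u⁻¹` (for `u` a generator with index `i`) swaps `u` with its partner
(`a'_i ↔ a''_i`); consequently any product
`α_1·(u_1 - u_1⁻¹)·α_2 ··· α_{k+1}·(u_{k+1} - u_{k+1}⁻¹)·α_{k+2}` can be
rewritten as `β·∏_t (w_t - w_t⁻¹)` for suitable `β ∈ G̃_m` and generators
`w_t`. -/
theorem stmt_10 (m k : ℕ) :
    (∀ i j : Fin m, i < j → ∀ s t : Bool,
      ι m (gen (j, s)) * D (i, t) = D (i, !t) * ι m (gen (j, s))) ∧
    (∀ (α : Fin (k + 2) → Gt m) (u : Fin (k + 1) → Fin m × Bool),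
      ∃ (β : Gt m) (w : Fin (k + 1) → Fin m × Bool),
        (List.ofFn fun t : Fin (k + 1) =>
            ι m (α t.castSucc) * D (u t)).prod * ι m (α (Fin.last (k + 1))) =
          ι m β * (List.ofFn fun t : Fin (k + 1) => D (w t)).prod) := by
  constructor
  · intro i j hij s t
    exact Dmul' (Gt.swap hij s t) (cj5 (Gt.swap hij s t))
  · exact main2 m k
end
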